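/- arXiv:0706.4032 — 5 statements merged into one kernel-verified Lean document; each statement's English description precedes it below -/
import Mathlib

section
/- Let M, N ⊆ ℝⁿ, f : M → N a surjection with d(f(x), f(y)) < ε ⟺ d(x, y) < ε, and suppose M satisfies the separation property (for distinct x, y ∈ M there is z ∈ M with d(x, z) > ε and d(y, z) < ε). Then for each x ∈ M, N \ {f(x)} = ⋃_{z ∈ M, d(x,z) > ε} B'(f(z), ε), where B'(v, ε) is the open ε-ball in N centered at v. -/
theorem complement_image_point_eq_union_of_balls {n : ℕ}
    (M N : Set (EuclideanSpace ℝ (Fin n)))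
    (f : EuclideanSpace ℝ (Fin n) → EuclideanSpace ℝ (Fin n))
    (hmaps : Set.MapsTo f M N) (hsurj : Set.SurjOn f M N)
    (ε : ℝ) (hε : 0 < ε)
    (hiff : ∀ x ∈ M, ∀ y ∈ M, dist (f x) (f y) < ε ↔ dist x y < ε)
    (hsep : ∀ x ∈ M, ∀ y ∈ M, x ≠ y → ∃ z ∈ M, dist x z > ε ∧ dist y z < ε) :
    ∀ x ∈ M, N \ {f x} =
      ⋃ z ∈ {z | z ∈ M ∧ dist x z > ε}, (Metric.ball (f z) ε ∩ N) := by
  intro x hx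
  ext w
  simp only [Set.mem_diff, Set.mem_singleton_iff, Set.mem_iUnion, Set.mem_setOf_eq,
    Set.mem_inter_iff, Metric.mem_ball, exists_prop]
  constructor
  · rintro ⟨hwN, hwx⟩
    obtain ⟨y, hy, rfl⟩ := hsurj hwN
    have hyx : x ≠ y := fun h => hwx (h ▸ rfl)
    obtain ⟨z, hz, hxz, hyz⟩ := hsep x hx y hy hyx
    exact ⟨z, ⟨hz, hxz⟩, (hiff y hy z hz).2 hyz, hmaps hy⟩
  · rintro ⟨z, ⟨hz, hxz⟩, hwz, hwN⟩
    refine ⟨hwN, fun h => ?_⟩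
    subst h
    exact absurd ((hiff x hx z hz).1 hwz) (not_lt.2 hxz.le)
end

section
/- Let M, N be closed subsets of ℝⁿ and f : M → N a surjection such that for a fixed ε > 0, d(f(x), f(y)) < ε if and only if d(x, y) < ε. Suppose that for each pair of distinct points x, y ∈ M, there is z ∈ M with d(x, z) > ε and d(y, z) < ε, and similarly for each pair of distinct points u, v ∈ N there is w ∈ N with d(u, w) > ε and d(v, w) < ε. Then f is continuous. -/
/-!
Let `xₖ → x₀` in `M`. Once `d(xₖ, x₀) < ε`, the points `f xₖ` stay in the compact set
`N ∩ closedBall (f x₀) ε`, so it suffices that `f x₀` is their only cluster point. If `v ≠ f x₀`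
were another one, separation in `N` gives `w = f z` with `d(v, w) > ε` and `d(f x₀, w) < ε`.
Then `d(x₀, z) < ε`, hence `d(xₖ, z) < ε` and `d(f xₖ, w) < ε` for large `k`, which keeps
`f xₖ` away from the open set `{y | d(y, w) > ε}` around `v`.
-/

open Filter Topology Metric

section

variable {X Y : Type*} [PseudoMetricSpace X] [PseudoMetricSpace Y] {M : Set X} {f : X → Y}
  {ε : ℝ}

lemma eventually_nhdsWithin_dist_apply_lt
    (hiff : ∀ x ∈ M, ∀ y ∈ M, dist (f x) (f y) < ε ↔ dist x y < ε)
    {x₀ z : X} (hz : z ∈ M) (hx₀z : dist x₀ z < ε) :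
    ∀ᶠ x in 𝓝[M] x₀, dist (f x) (f z) < ε := by
  have hball : ball z ε ∈ 𝓝 x₀ := isOpen_ball.mem_nhds (mem_ball.2 hx₀z)
  filter_upwards [self_mem_nhdsWithin, mem_nhdsWithin_of_mem_nhds hball] with x hxM hxz
  exact (hiff x hxM z hz).2 hxz

lemma eq_apply_of_mapClusterPt_nhdsWithin {N : Set Y} (hsurj : Set.SurjOn f M N)
    (hiff : ∀ x ∈ M, ∀ y ∈ M, dist (f x) (f y) < ε ↔ dist x y < ε)
    (hsepN : ∀ u ∈ N, ∀ v ∈ N, u ≠ v → ∃ w ∈ N, dist u w > ε ∧ dist v w < ε)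
    {x₀ : X} (hx₀ : x₀ ∈ M) (hfx₀ : f x₀ ∈ N) {v : Y} (hv : v ∈ N)
    (hcluster : MapClusterPt v (𝓝[M] x₀) f) : v = f x₀ := by
  by_contra hne
  obtain ⟨w, hwN, hvw, hfx₀w⟩ := hsepN v hv (f x₀) hfx₀ hne
  obtain ⟨z, hz, rfl⟩ := hsurj hwN
  have hx₀z : dist x₀ z < ε := (hiff x₀ hx₀ z hz).1 hfx₀w
  have hfar : ∀ᶠ y in 𝓝 v, ε < dist y (f z) :=
    (isOpen_lt continuous_const (continuous_id.dist continuous_const)).mem_nhds hvw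
  have hnear := eventually_nhdsWithin_dist_apply_lt hiff hz hx₀z
  obtain ⟨x, hxfar, hxnear⟩ := ((hcluster.frequently hfar).and_eventually hnear).exists
  exact hxfar.not_gt hxnear

end

theorem reconstruction_continuous_general {n : ℕ}
    (M N : Set (EuclideanSpace ℝ (Fin n)))
    (hN : IsClosed N)
    (f : EuclideanSpace ℝ (Fin n) → EuclideanSpace ℝ (Fin n))
    (hmaps : Set.MapsTo f M N) (hsurj : Set.SurjOn f M N)
    (ε : ℝ) (hε : 0 < ε)
    (hiff : ∀ x ∈ M, ∀ y ∈ M, dist (f x) (f y) < ε ↔ dist x y < ε)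
    (hsepN : ∀ u ∈ N, ∀ v ∈ N, u ≠ v → ∃ w ∈ N, dist u w > ε ∧ dist v w < ε) :
    ContinuousOn f M := by
  intro x₀ hx₀
  have hK : IsCompact (N ∩ closedBall (f x₀) ε) := (isCompact_closedBall _ _).inter_left hN
  have hmem : ∀ᶠ x in 𝓝[M] x₀, f x ∈ N ∩ closedBall (f x₀) ε := by
    filter_upwards [self_mem_nhdsWithin,
      eventually_nhdsWithin_dist_apply_lt hiff hx₀ (by rwa [dist_self])] with x hxM hx
    exact ⟨hmaps hxM, mem_closedBall.2 hx.le⟩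
  exact hK.tendsto_nhds_of_unique_mapClusterPt hmem fun v hv hcluster =>
    eq_apply_of_mapClusterPt_nhdsWithin hsurj hiff hsepN hx₀ (hmaps hx₀) hv.1 hcluster

theorem reconstruction_continuous {n : ℕ}
    (M N : Set (EuclideanSpace ℝ (Fin n)))
    (hM : IsClosed M) (hN : IsClosed N)
    (f : EuclideanSpace ℝ (Fin n) → EuclideanSpace ℝ (Fin n))
    (hmaps : Set.MapsTo f M N) (hsurj : Set.SurjOn f M N)
    (ε : ℝ) (hε : 0 < ε)
    (hiff : ∀ x ∈ M, ∀ y ∈ M, dist (f x) (f y) < ε ↔ dist x y < ε)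
    (hsepM : ∀ x ∈ M, ∀ y ∈ M, x ≠ y → ∃ z ∈ M, dist x z > ε ∧ dist y z < ε)
    (hsepN : ∀ u ∈ N, ∀ v ∈ N, u ≠ v → ∃ w ∈ N, dist u w > ε ∧ dist v w < ε) :
    ContinuousOn f M :=
  reconstruction_continuous_general M N hN f hmaps hsurj ε hε hiff hsepN
end

section
/- Reconstruction Theorem: Let M, N be closed subsets of ℝⁿ and f : M → N a surjection such that for some fixed ε > 0, d(f(x), f(y)) < ε if and only if d(x, y) < ε. Suppose that whenever x ≠ y in M there exists z ∈ M with d(x, z) > ε and d(y, z) < ε, and whenever u ≠ v in N there exists w ∈ N with d(u, w) > ε and d(v, w) < ε. Then f is a homeomorphism. -/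
open Filter Topology

/-- Key sequential-continuity lemma: under the reconstruction hypotheses,
`f` is sequentially continuous on `M`. -/
lemma reconstruction_key {n : ℕ}
    (M N : Set (EuclideanSpace ℝ (Fin n))) (hN : IsClosed N)
    (f : EuclideanSpace ℝ (Fin n) → EuclideanSpace ℝ (Fin n))
    (hmaps : Set.MapsTo f M N) (hsurj : Set.SurjOn f M N)
    (ε : ℝ) (hε : 0 < ε)
    (hiff : ∀ x ∈ M, ∀ y ∈ M, dist (f x) (f y) < ε ↔ dist x y < ε)
    (hsepN : ∀ u ∈ N, ∀ v ∈ N, u ≠ v → ∃ w ∈ N, dist u w > ε ∧ dist v w < ε)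
    {x : ℕ → EuclideanSpace ℝ (Fin n)} (hx : ∀ k, x k ∈ M)
    {p : EuclideanSpace ℝ (Fin n)} (hp : p ∈ M)
    (hlim : Tendsto x atTop (𝓝 p)) :
    Tendsto (fun k => f (x k)) atTop (𝓝 (f p)) := by
  by_contra hcon
  rw [Metric.tendsto_atTop] at hcon
  push_neg at hcon
  obtain ⟨δ, hδ, hfreq⟩ := hcon
  set s : Set (EuclideanSpace ℝ (Fin n)) := N ∩ Metric.closedBall (f p) ε with hs
  have hev : ∀ᶠ k in atTop, f (x k) ∈ s := by
    have h1 : ∀ᶠ k in atTop, x k ∈ Metric.ball p ε := hlim (Metric.ball_mem_nhds p hε)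
    filter_upwards [h1] with k hk
    refine ⟨hmaps (hx k), ?_⟩
    have : dist (f (x k)) (f p) < ε := (hiff _ (hx k) _ hp).2 hk
    exact Metric.mem_closedBall.2 this.le
  have hfreq' : ∃ᶠ k in atTop, δ ≤ dist (f (x k)) (f p) ∧ f (x k) ∈ s := by
    have : ∃ᶠ k in atTop, δ ≤ dist (f (x k)) (f p) := by
      rw [Filter.frequently_atTop]
      intro a
      obtain ⟨b, hb, hb2⟩ := hfreq a
      exact ⟨b, hb, hb2⟩
    exact this.and_eventually hev
  obtain ⟨φ, hφ, hφP⟩ := Filter.extraction_of_frequently_atTop hfreq'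
  -- the subsequence lies in the bounded set s; extract a convergent sub-subsequence
  have hbdd : Bornology.IsBounded s :=
    Metric.isBounded_closedBall.subset Set.inter_subset_right
  have hmem : ∃ᶠ k in atTop, f (x (φ k)) ∈ s :=
    Filter.Eventually.frequently (Filter.Eventually.of_forall fun k => (hφP k).2)
  obtain ⟨q, hqcl, ψ, hψ, hqlim⟩ := tendsto_subseq_of_frequently_bounded hbdd hmem
  have hscl : IsClosed s := hN.inter Metric.isClosed_closedBall
  rw [hscl.closure_eq] at hqcl
  have hqN : q ∈ N := hqcl.1
  -- q is far from f p
  have hdq : δ ≤ dist q (f p) := by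
    have ht : Tendsto (fun k => dist (f (x (φ (ψ k)))) (f p)) atTop (𝓝 (dist q (f p))) :=
      hqlim.dist tendsto_const_nhds
    exact ge_of_tendsto ht (Filter.Eventually.of_forall fun k => (hφP (ψ k)).1)
  have hqne : q ≠ f p := by
    intro h
    rw [h, dist_self] at hdq
    linarith
  obtain ⟨w, hwN, hw1, hw2⟩ := hsepN q hqN (f p) (hmaps hp) hqne
  obtain ⟨z, hzM, hfz⟩ := hsurj hwN
  rw [← hfz] at hw1 hw2
  have hpz : dist p z < ε := (hiff _ hp _ hzM).1 hw2
  -- x ∘ φ ∘ ψ → p, so eventually dist (x ...) z < ε, hence dist (f ...) (f z) < ε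
  have hsub : Tendsto (fun k => x (φ (ψ k))) atTop (𝓝 p) :=
    hlim.comp ((hφ.comp hψ).tendsto_atTop)
  have hev2 : ∀ᶠ k in atTop, dist (f (x (φ (ψ k)))) (f z) < ε := by
    have h1 : ∀ᶠ k in atTop, x (φ (ψ k)) ∈ Metric.ball z ε := by
      have : Metric.ball z ε ∈ 𝓝 p := Metric.isOpen_ball.mem_nhds (by simpa [dist_comm] using hpz)
      exact hsub this
    filter_upwards [h1] with k hk
    exact (hiff _ (hx _) _ hzM).2 hk
  have hle : dist q (f z) ≤ ε := by
    have ht : Tendsto (fun k => dist (f (x (φ (ψ k)))) (f z)) atTop (𝓝 (dist q (f z))) :=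
      hqlim.dist tendsto_const_nhds
    exact le_of_tendsto ht (hev2.mono fun k hk => hk.le)
  linarith [hw1]

theorem reconstruction_theorem {n : ℕ}
    (M N : Set (EuclideanSpace ℝ (Fin n)))
    (hM : IsClosed M) (hN : IsClosed N)
    (f : EuclideanSpace ℝ (Fin n) → EuclideanSpace ℝ (Fin n))
    (hmaps : Set.MapsTo f M N) (hsurj : Set.SurjOn f M N)
    (ε : ℝ) (hε : 0 < ε)
    (hiff : ∀ x ∈ M, ∀ y ∈ M, dist (f x) (f y) < ε ↔ dist x y < ε)
    (hsepM : ∀ x ∈ M, ∀ y ∈ M, x ≠ y → ∃ z ∈ M, dist x z > ε ∧ dist y z < ε)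
    (hsepN : ∀ u ∈ N, ∀ v ∈ N, u ≠ v → ∃ w ∈ N, dist u w > ε ∧ dist v w < ε) :
    ∃ e : M ≃ₜ N, ∀ x : M, (e x : EuclideanSpace ℝ (Fin n)) = f x := by
  -- f is injective on M
  have hinj : Set.InjOn f M := by
    intro a ha b hb hab
    by_contra hne
    obtain ⟨z, hz, h1, h2⟩ := hsepM a ha b hb hne
    have : dist (f b) (f z) < ε := (hiff _ hb _ hz).2 h2
    rw [← hab] at this
    have : dist a z < ε := (hiff _ ha _ hz).1 this
    linarith
  -- the inverse function
  set g : EuclideanSpace ℝ (Fin n) → EuclideanSpace ℝ (Fin n) := Function.invFunOn f M with hg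
  have hg1 : ∀ q ∈ N, g q ∈ M := fun q hq => Function.invFunOn_mem (hsurj hq)
  have hg2 : ∀ q ∈ N, f (g q) = q := fun q hq => Function.invFunOn_eq (hsurj hq)
  have hgf : ∀ a ∈ M, g (f a) = a := fun a ha =>
    hinj (hg1 _ (hmaps ha)) ha (hg2 _ (hmaps ha))
  have hgmaps : Set.MapsTo g N M := hg1
  have hgsurj : Set.SurjOn g N M := fun a ha => ⟨f a, hmaps ha, hgf a ha⟩
  have hgiff : ∀ u ∈ N, ∀ v ∈ N, dist (g u) (g v) < ε ↔ dist u v < ε := by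
    intro u hu v hv
    rw [← hiff _ (hg1 u hu) _ (hg1 v hv), hg2 u hu, hg2 v hv]
  refine ⟨{ toFun := fun a => ⟨f a, hmaps a.2⟩
            invFun := fun q => ⟨g q, hg1 q q.2⟩
            left_inv := fun a => Subtype.ext (hgf a a.2)
            right_inv := fun q => Subtype.ext (hg2 q q.2)
            continuous_toFun := ?_
            continuous_invFun := ?_ }, fun a => rfl⟩
  · apply Continuous.subtype_mk
    rw [continuous_iff_seqContinuous]
    intro u p hu
    have h1 : Tendsto (fun k => (u k : EuclideanSpace ℝ (Fin n))) atTop (𝓝 (p : EuclideanSpace ℝ (Fin n))) :=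
      (continuous_subtype_val.tendsto p).comp hu
    exact reconstruction_key M N hN f hmaps hsurj ε hε hiff hsepN (fun k => (u k).2) p.2 h1
  · apply Continuous.subtype_mk
    rw [continuous_iff_seqContinuous]
    intro u p hu
    have h1 : Tendsto (fun k => (u k : EuclideanSpace ℝ (Fin n))) atTop (𝓝 (p : EuclideanSpace ℝ (Fin n))) :=
      (continuous_subtype_val.tendsto p).comp hu
    exact reconstruction_key N M hM g hgmaps hgsurj ε hε hgiff hsepM (fun k => (u k).2) p.2 h1
end

section
/- Let M, N be compact subsets of ℝⁿ and f : M → N a surjection such that for some fixed ε > 0: d(f(x), f(y)) < ε iff d(x, y) < ε, and d(f(x), f(y)) > ε iff d(x, y) > ε. Suppose for each pair of distinct x, y ∈ M there is z ∈ M with d(x, z) > ε and d(y, z) < ε. Then f is a homeomorphism. -/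
set_option maxHeartbeats 1000000 in
theorem reconstruction_theorem_compact {n : ℕ}
    (M N : Set (EuclideanSpace ℝ (Fin n)))
    (hM : IsCompact M) (hN : IsCompact N)
    (f : EuclideanSpace ℝ (Fin n) → EuclideanSpace ℝ (Fin n))
    (hmaps : Set.MapsTo f M N) (hsurj : Set.SurjOn f M N)
    (ε : ℝ) (hε : 0 < ε)
    (hlt : ∀ x ∈ M, ∀ y ∈ M, dist (f x) (f y) < ε ↔ dist x y < ε)
    (hgt : ∀ x ∈ M, ∀ y ∈ M, dist (f x) (f y) > ε ↔ dist x y > ε)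
    (hsepM : ∀ x ∈ M, ∀ y ∈ M, x ≠ y → ∃ z ∈ M, dist x z > ε ∧ dist y z < ε) :
    ∃ e : M ≃ₜ N, ∀ x : M, (e x : EuclideanSpace ℝ (Fin n)) = f x := by
  haveI : CompactSpace M := isCompact_iff_compactSpace.mp hM
  haveI : CompactSpace N := isCompact_iff_compactSpace.mp hN
  have hinj : Set.InjOn f M := by
    intro x hx y hy hxy
    by_contra hne
    obtain ⟨z, hz, hxz, hyz⟩ := hsepM x hx y hy hne
    have h1 : dist (f x) (f z) > ε := (hgt x hx z hz).mpr hxz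
    have h2 : dist (f y) (f z) < ε := (hlt y hy z hz).mpr hyz
    rw [hxy] at h1; linarith
  set F : M → N := hmaps.restrict f M N with hF
  have hFval : ∀ a : M, (F a : EuclideanSpace ℝ (Fin n)) = f a := fun a => rfl
  have hFinj : Function.Injective F := fun a b h =>
    Subtype.ext (hinj a.2 b.2 (congrArg Subtype.val h))
  have hFsurj : Function.Surjective F := by
    rintro ⟨y, hy⟩
    obtain ⟨x, hx, hfx⟩ := hsurj hy
    exact ⟨⟨x, hx⟩, Subtype.ext hfx⟩
  set G : Set (↥M × ↥N) := {p | F p.1 = p.2} with hG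
  have hGclosed : IsClosed G := by
    rw [← isOpen_compl_iff, isOpen_iff_mem_nhds]
    rintro ⟨a, b⟩ hab
    obtain ⟨y, hy⟩ := hFsurj b
    have hya : (a : EuclideanSpace ℝ (Fin n)) ≠ y := by
      intro h
      exact hab (show F a = b by rw [← hy]; exact congrArg F (Subtype.ext h))
    obtain ⟨z, hz, haz, hyz⟩ := hsepM a.1 a.2 y.1 y.2 hya
    have hbz : dist (b : EuclideanSpace ℝ (Fin n)) (f z) < ε := by
      rw [← hy, hFval]
      exact (hlt y.1 y.2 z hz).mpr hyz
    set U : Set (↥M × ↥N) := {p : ↥M × ↥N |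
        dist (p.1 : EuclideanSpace ℝ (Fin n)) z > ε ∧
        dist (p.2 : EuclideanSpace ℝ (Fin n)) (f z) < ε} with hUdef
    have hUopen : IsOpen U := by
      apply IsOpen.inter
      · exact isOpen_lt continuous_const
          (((continuous_subtype_val.comp continuous_fst).dist continuous_const))
      · exact isOpen_lt
          (((continuous_subtype_val.comp continuous_snd).dist continuous_const))
          continuous_const
    have hmem : (a, b) ∈ U := ⟨haz, hbz⟩
    apply Filter.mem_of_superset (hUopen.mem_nhds hmem)
    rintro ⟨p, q⟩ ⟨hp, hq⟩ hpq
    have : F p = q := hpq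
    have h1 : dist (f p) (f z) > ε := (hgt p.1 p.2 z hz).mpr hp
    rw [← hFval p, this] at h1
    linarith
  have hFcont : Continuous F := by
    rw [continuous_iff_isClosed]
    intro C hC
    have himg : F ⁻¹' C = Prod.fst '' (G ∩ Prod.snd ⁻¹' C) := by
      ext a
      constructor
      · intro h
        exact ⟨(a, F a), ⟨rfl, h⟩, rfl⟩
      · rintro ⟨⟨p, q⟩, ⟨hpq, hqC⟩, rfl⟩
        have : F p = q := hpq
        simpa [Set.mem_preimage, this] using hqC
    rw [himg]
    exact ((hGclosed.inter (hC.preimage continuous_snd)).isCompact.image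
      continuous_fst).isClosed
  let e := Equiv.ofBijective F ⟨hFinj, hFsurj⟩
  exact ⟨hFcont.homeoOfEquivCompactToT2 (f := e), fun x => rfl⟩
end

section
/- Let M, N be closed subsets of ℝⁿ, f : M → N a surjection with d(f(x), f(y)) < ε ⟺ d(x, y) < ε, and suppose both M and N satisfy the ε-separation property. If (x_k) is a sequence in M converging to x ∈ M, then for every δ > 0 there exists an integer s and elements v₁, …, v_s ∈ M with d(x, v_j) > ε such that the closed ball K = cl(B'(f(x), ε)) in N is covered by (K ∩ B'(f(x), δ)) ∪ ⋃_{j=1}^s (K ∩ B'(f(v_j), ε)). -/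
/-!
Every point of `K` other than `f x` is `f p` with `p ≠ x`; separation in `M` gives `z` with
`d(x, z) > ε` and `d(p, z) < ε`, hence `d(f p, f z) < ε`. These balls `B'(f z, ε)` cover the
compact set `K \ B'(f x, δ)`, so finitely many of them do.
-/

open Set Metric

theorem IsCompact.exists_fin_subcover_of_subset_biUnion {ι X : Type*} [TopologicalSpace X]
    {K : Set X} (hK : IsCompact K) {U : ι → Set X} (hU : ∀ i, IsOpen (U i)) {S : Set ι}
    (hcov : K ⊆ ⋃ i ∈ S, U i) :
    ∃ (s : ℕ) (v : Fin s → ι), (∀ j, v j ∈ S) ∧ K ⊆ ⋃ j, U (v j) := by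
  obtain ⟨b, hbS, hbfin, hbcov⟩ := hK.elim_finite_subcover_image (fun i _ => hU i) hcov
  obtain ⟨s, e, rfl⟩ := hbfin.fin_embedding
  exact ⟨s, e, fun j => hbS (mem_range_self j), by rwa [biUnion_range] at hbcov⟩

theorem diff_singleton_subset_iUnion_ball_of_separated {α β : Type*} [PseudoMetricSpace α]
    [PseudoMetricSpace β] {M : Set α} {N : Set β} {f : α → β} {ε : ℝ}
    (hsurj : SurjOn f M N)
    (hclose : ∀ x ∈ M, ∀ y ∈ M, dist x y < ε → dist (f x) (f y) < ε)
    (hsep : ∀ x ∈ M, ∀ y ∈ M, x ≠ y → ∃ z ∈ M, dist x z > ε ∧ dist y z < ε)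
    {x : α} (hx : x ∈ M) :
    N \ {f x} ⊆ ⋃ z ∈ {z ∈ M | dist x z > ε}, ball (f z) ε := by
  rintro u ⟨huN, hux⟩
  obtain ⟨p, hpM, rfl⟩ := hsurj huN
  have hxp : x ≠ p := by rintro rfl; exact hux rfl
  obtain ⟨z, hzM, hxz, hpz⟩ := hsep x hx p hpM hxp
  exact mem_biUnion ⟨hzM, hxz⟩ (hclose p hpM z hzM hpz)

theorem finite_subcover_step_general {n : ℕ}
    (M N : Set (EuclideanSpace ℝ (Fin n)))
    (hN : IsClosed N)
    (f : EuclideanSpace ℝ (Fin n) → EuclideanSpace ℝ (Fin n))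
    (hsurj : Set.SurjOn f M N)
    (ε : ℝ)
    (hiff : ∀ x ∈ M, ∀ y ∈ M, dist (f x) (f y) < ε ↔ dist x y < ε)
    (hsepM : ∀ x ∈ M, ∀ y ∈ M, x ≠ y → ∃ z ∈ M, dist x z > ε ∧ dist y z < ε)
    (x : EuclideanSpace ℝ (Fin n)) (hx : x ∈ M) :
    ∀ δ > 0, ∃ (s : ℕ) (v : Fin s → EuclideanSpace ℝ (Fin n)),
      (∀ j, v j ∈ M ∧ dist x (v j) > ε) ∧
      closure (Metric.ball (f x) ε ∩ N) ⊆
        (closure (Metric.ball (f x) ε ∩ N) ∩ Metric.ball (f x) δ) ∪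
        ⋃ j, (closure (Metric.ball (f x) ε ∩ N) ∩ Metric.ball (f (v j)) ε) := by
  intro δ hδ
  set K := closure (ball (f x) ε ∩ N)
  have hK : IsCompact K := (isBounded_ball.subset inter_subset_left).isCompact_closure
  have hKN : K ⊆ N := hN.closure_subset_iff.mpr inter_subset_right
  have hfar : K \ ball (f x) δ ⊆ N \ {f x} :=
    sdiff_subset_sdiff hKN (singleton_subset_iff.mpr (mem_ball_self hδ))
  obtain ⟨s, v, hvM, hcov⟩ := (hK.diff isOpen_ball).exists_fin_subcover_of_subset_biUnion
    (fun _ => isOpen_ball) (hfar.trans <|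
      diff_singleton_subset_iUnion_ball_of_separated hsurj (fun x hx y hy => (hiff x hx y hy).mpr)
        hsepM hx)
  refine ⟨s, v, hvM, fun u hu => ?_⟩
  by_cases hud : u ∈ ball (f x) δ
  · exact Or.inl ⟨hu, hud⟩
  · obtain ⟨j, hj⟩ := mem_iUnion.mp (hcov ⟨hu, hud⟩)
    exact Or.inr (mem_iUnion.mpr ⟨j, hu, hj⟩)

theorem finite_subcover_step {n : ℕ}
    (M N : Set (EuclideanSpace ℝ (Fin n)))
    (hM : IsClosed M) (hN : IsClosed N)
    (f : EuclideanSpace ℝ (Fin n) → EuclideanSpace ℝ (Fin n))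
    (hmaps : Set.MapsTo f M N) (hsurj : Set.SurjOn f M N)
    (ε : ℝ) (hε : 0 < ε)
    (hiff : ∀ x ∈ M, ∀ y ∈ M, dist (f x) (f y) < ε ↔ dist x y < ε)
    (hsepM : ∀ x ∈ M, ∀ y ∈ M, x ≠ y → ∃ z ∈ M, dist x z > ε ∧ dist y z < ε)
    (hsepN : ∀ u ∈ N, ∀ v ∈ N, u ≠ v → ∃ w ∈ N, dist u w > ε ∧ dist v w < ε)
    (x : EuclideanSpace ℝ (Fin n)) (hx : x ∈ M)
    (xs : ℕ → EuclideanSpace ℝ (Fin n)) (hxs : ∀ k, xs k ∈ M)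
    (hlim : Filter.Tendsto xs Filter.atTop (nhds x)) :
    ∀ δ > 0, ∃ (s : ℕ) (v : Fin s → EuclideanSpace ℝ (Fin n)),
      (∀ j, v j ∈ M ∧ dist x (v j) > ε) ∧
      closure (Metric.ball (f x) ε ∩ N) ⊆
        (closure (Metric.ball (f x) ε ∩ N) ∩ Metric.ball (f x) δ) ∪
        ⋃ j, (closure (Metric.ball (f x) ε ∩ N) ∩ Metric.ball (f (v j)) ε) :=
  finite_subcover_step_general M N hN f hsurj ε hiff hsepM x hx
end
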